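/- Let f : ℝ^l → ℝ^l satisfy ⟨y − y', f(y) − f(y')⟩ ≤ 0 for all y, y'. Let a > 0, θ_a : ℝ^l → [0,1] smooth with θ_a = 1 on {|y| ≤ a}, θ_a = 0 on {|y| ≥ a+1}, let ψ ≥ 0 with |f(y) − f(0)| ≤ ψ for |y| ≤ a+1, and for n ∈ ℕ define f̂_n(y) := θ_a(y)·(f(y) − f(0))·n/(ψ ∨ n) + f(0). Then f̂_n satisfies ⟨y − y', f̂_n(y) − f̂_n(y')⟩ ≤ n·‖∇θ_a‖_∞·|y − y'|² for all y, y', and |f̂_n(y)| ≤ n + |f(0)| for all y. -/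

import Mathlib

theorem stmt6 (l : ℕ) (a : ℝ) (ha : 0 < a) (ψ : ℝ) (hψ : 0 ≤ ψ) (n : ℕ) (hn : 0 < n)
    (K : ℝ) (hK : 0 ≤ K)
    (f : EuclideanSpace ℝ (Fin l) → EuclideanSpace ℝ (Fin l))
    (hmono : ∀ y y', (inner ℝ (y - y') (f y - f y') : ℝ) ≤ 0)
    (θ : EuclideanSpace ℝ (Fin l) → ℝ)
    (hθsm : ContDiff ℝ (⊤ : ℕ∞) θ) (hθ01 : ∀ y, θ y ∈ Set.Icc (0 : ℝ) 1)
    (hθ1 : ∀ y, ‖y‖ ≤ a → θ y = 1) (hθ0 : ∀ y, a + 1 ≤ ‖y‖ → θ y = 0)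
    (hψb : ∀ y, ‖y‖ ≤ a + 1 → ‖f y - f 0‖ ≤ ψ)
    (hgrad : ∀ y, ‖fderiv ℝ θ y‖ ≤ K)
    (fhat : EuclideanSpace ℝ (Fin l) → EuclideanSpace ℝ (Fin l))
    (hfhat : ∀ y, fhat y = θ y • (((n : ℝ) / max ψ (n : ℝ)) • (f y - f 0)) + f 0) :
    (∀ y y', (inner ℝ (y - y') (fhat y - fhat y') : ℝ) ≤ (n : ℝ) * K * ‖y - y'‖ ^ 2)
    ∧ (∀ y, ‖fhat y‖ ≤ (n : ℝ) + ‖f 0‖) := by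
  set c : ℝ := (n : ℝ) / max ψ (n : ℝ) with hc
  have hnpos : (0 : ℝ) < n := by exact_mod_cast hn
  have hmaxpos : (0 : ℝ) < max ψ (n : ℝ) := lt_of_lt_of_le hnpos (le_max_right _ _)
  have hc0 : 0 ≤ c := div_nonneg hnpos.le hmaxpos.le
  have hcψ : c * ψ ≤ (n : ℝ) := by
    rw [hc, div_mul_eq_mul_div, div_le_iff₀ hmaxpos]
    exact mul_le_mul_of_nonneg_left (le_max_left _ _) hnpos.le
  -- bound on c * ‖f y - f 0‖ for y with ‖y‖ ≤ a+1
  have hcb : ∀ y, ‖y‖ ≤ a + 1 → c * ‖f y - f 0‖ ≤ (n : ℝ) := fun y hy =>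
    le_trans (mul_le_mul_of_nonneg_left (hψb y hy) hc0) hcψ
  -- Lipschitz bound on θ
  have hlip : ∀ x y : EuclideanSpace ℝ (Fin l), ‖θ x - θ y‖ ≤ K * ‖x - y‖ := by
    intro x y
    exact Convex.norm_image_sub_le_of_norm_fderiv_le
      (fun z _ => (hθsm.differentiable (by simp)).differentiableAt)
      (fun z _ => hgrad z) convex_univ (Set.mem_univ y) (Set.mem_univ x)
  have hdiff : ∀ y y', fhat y - fhat y' = (c * θ y) • (f y - f 0) - (c * θ y') • (f y' - f 0) := by
    intro y y'
    simp only [hfhat, smul_smul]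
    rw [mul_comm (θ y) c, mul_comm (θ y') c]
    abel
  -- key case: ‖y‖ ≤ a+1
  have key : ∀ y y' : EuclideanSpace ℝ (Fin l), ‖y‖ ≤ a + 1 →
      (inner ℝ (y - y') (fhat y - fhat y') : ℝ) ≤ (n : ℝ) * K * ‖y - y'‖ ^ 2 := by
    intro y y' hy
    have hdecomp : fhat y - fhat y'
        = (c * θ y') • (f y - f y') + (c * (θ y - θ y')) • (f y - f 0) := by
      rw [hdiff]
      have : f y - f y' = (f y - f 0) - (f y' - f 0) := by abel
      rw [this]
      simp only [smul_sub, sub_smul, mul_sub]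
      abel
    rw [hdecomp, inner_add_right, real_inner_smul_right, real_inner_smul_right]
    have h1 : c * θ y' * inner ℝ (y - y') (f y - f y') ≤ 0 :=
      mul_nonpos_of_nonneg_of_nonpos (mul_nonneg hc0 (hθ01 y').1) (hmono y y')
    have h2 : c * (θ y - θ y') * (inner ℝ (y - y') (f y - f 0) : ℝ)
        ≤ (n : ℝ) * K * ‖y - y'‖ ^ 2 := by
      calc c * (θ y - θ y') * (inner ℝ (y - y') (f y - f 0) : ℝ)
          ≤ |c * (θ y - θ y') * (inner ℝ (y - y') (f y - f 0) : ℝ)| := le_abs_self _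
        _ = c * |θ y - θ y'| * |(inner ℝ (y - y') (f y - f 0) : ℝ)| := by
            rw [abs_mul, abs_mul, abs_of_nonneg hc0]
        _ ≤ c * (K * ‖y - y'‖) * (‖y - y'‖ * ‖f y - f 0‖) := by
            apply mul_le_mul
            · exact mul_le_mul_of_nonneg_left (hlip y y') hc0
            · exact abs_real_inner_le_norm _ _
            · exact abs_nonneg _
            · exact mul_nonneg hc0 (mul_nonneg hK (norm_nonneg _))
        _ = (c * ‖f y - f 0‖) * K * ‖y - y'‖ ^ 2 := by ring
        _ ≤ (n : ℝ) * K * ‖y - y'‖ ^ 2 := by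
            apply mul_le_mul_of_nonneg_right _ (sq_nonneg _)
            exact mul_le_mul_of_nonneg_right (hcb y hy) hK
    linarith
  constructor
  · intro y y'
    by_cases hy : ‖y‖ ≤ a + 1
    · exact key y y' hy
    by_cases hy' : ‖y'‖ ≤ a + 1
    · have hswap : (inner ℝ (y - y') (fhat y - fhat y') : ℝ)
          = inner ℝ (y' - y) (fhat y' - fhat y) := by
        rw [show y - y' = -(y' - y) by abel, show fhat y - fhat y' = -(fhat y' - fhat y) by abel,
          inner_neg_neg]
      rw [hswap, show ‖y - y'‖ = ‖y' - y‖ from norm_sub_rev _ _]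
      exact key y' y hy'
    · have h0 : fhat y - fhat y' = 0 := by
        rw [hdiff, hθ0 y (le_of_not_ge hy), hθ0 y' (le_of_not_ge hy')]
        simp
      rw [h0, inner_zero_right]
      positivity
  · intro y
    rw [hfhat]
    refine le_trans (norm_add_le _ _) (add_le_add_left ?_ _)
    rw [norm_smul, norm_smul]
    by_cases hy : ‖y‖ ≤ a + 1
    · calc ‖θ y‖ * (‖c‖ * ‖f y - f 0‖)
          ≤ 1 * (‖c‖ * ‖f y - f 0‖) := by
            apply mul_le_mul_of_nonneg_right _ (by positivity)
            rw [Real.norm_eq_abs, abs_of_nonneg (hθ01 y).1]; exact (hθ01 y).2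
        _ = c * ‖f y - f 0‖ := by rw [one_mul, Real.norm_eq_abs, abs_of_nonneg hc0]
        _ ≤ (n : ℝ) := hcb y hy
    · rw [hθ0 y (le_of_not_ge hy)]
      simp [hnpos.le]
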